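/- arXiv:2509.06697 — 2 statements merged into one kernel-verified Lean document; each statement's English description precedes it below -/
import Mathlib

section
/- Suppose |ψ₁| < 1, |g(y,e)| ≤ A for all y, e ∈ ℝ (bounded nonlinear part), and the noise ε has mean zero and E[ε²] = s² < ∞, with ε independent of (y,e). Define V(y) = 1 + y². Then there exist δ ∈ (0,1) and a function B(e) = b₀ + b₁ e² with finite constants b₀, b₁ ≥ 0 such that for all y, e ∈ ℝ: E[V(ψ₁ y + ψ₂ e + g(y,e) + ε)] ≤ (1-δ) V(y) + B(e). -/
/-!
Since `ε` is centred, `E[V(c + ε)] = 1 + c² + E[ε²]`, so everything reduces to bounding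
`c² = (ψ₁ y + (ψ₂ e + g))²`. Young's inequality with weight `δ = (1 - ψ₁²)/2` gives
`c² ≤ (1 + δ) ψ₁² y² + (1 + δ⁻¹) (ψ₂ e + g)²`, where `(1 + δ) ψ₁² ≤ ψ₁² + δ = 1 - δ`,
and the bounded part contributes `(ψ₂ e + g)² ≤ 2 ψ₂² e² + 2 A²`.
-/

open MeasureTheory

lemma add_sq_le_one_add_mul_sq_add_one_add_inv_mul_sq {a b η : ℝ} (hη : 0 < η) :
    (a + b) ^ 2 ≤ (1 + η) * a ^ 2 + (1 + η⁻¹) * b ^ 2 := by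
  have hgap : η * ((1 + η) * a ^ 2 + (1 + η⁻¹) * b ^ 2 - (a + b) ^ 2) = (η * a - b) ^ 2 := by
    field_simp
    ring
  have hgap_nonneg := (mul_nonneg_iff_of_pos_left hη).mp (hgap ▸ sq_nonneg (η * a - b))
  linarith

lemma integral_one_add_add_sq {Ω : Type*} [MeasurableSpace Ω] {μ : Measure Ω}
    [IsProbabilityMeasure μ] {X : Ω → ℝ} (hX : Integrable X μ)
    (hX2 : Integrable (fun ω => X ω ^ 2) μ) (hmean : ∫ ω, X ω ∂μ = 0) (c : ℝ) :
    ∫ ω, (1 + (c + X ω) ^ 2) ∂μ = 1 + c ^ 2 + ∫ ω, X ω ^ 2 ∂μ := by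
  have hlin : Integrable (fun ω => 2 * c * X ω) μ := hX.const_mul _
  have haffine : Integrable (fun ω => 1 + c ^ 2 + 2 * c * X ω) μ := (integrable_const _).add hlin
  have hexpand : (fun ω => 1 + (c + X ω) ^ 2)
      = fun ω => (1 + c ^ 2 + 2 * c * X ω) + X ω ^ 2 := by
    ext ω
    ring
  rw [hexpand, integral_add haffine hX2,
    integral_add (integrable_const _) hlin, integral_const, integral_const_mul, hmean]
  simp

theorem narfima_drift_condition_general
    {Ω : Type*} [MeasurableSpace Ω] (μ : Measure Ω) [IsProbabilityMeasure μ]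
    (ψ₁ ψ₂ : ℝ) (hψ : |ψ₁| < 1)
    (g : ℝ → ℝ → ℝ) (A : ℝ) (hg : ∀ y e : ℝ, |g y e| ≤ A)
    (ε : Ω → ℝ)
    (hε1 : Integrable ε μ) (hε2 : Integrable (fun ω => ε ω ^ 2) μ)
    (hmean : ∫ ω, ε ω ∂μ = 0) :
    ∃ δ : ℝ, 0 < δ ∧ δ < 1 ∧
      ∃ b₀ b₁ : ℝ, 0 ≤ b₀ ∧ 0 ≤ b₁ ∧
        ∀ y e : ℝ,
          (∫ ω, (1 + (ψ₁ * y + ψ₂ * e + g y e + ε ω) ^ 2) ∂μ)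
            ≤ (1 - δ) * (1 + y ^ 2) + (b₀ + b₁ * e ^ 2) := by
  have hψ2 : ψ₁ ^ 2 < 1 := (sq_lt_one_iff_abs_lt_one ψ₁).mpr hψ
  set δ : ℝ := (1 - ψ₁ ^ 2) / 2 with hδdef
  have hδ : 0 < δ := by rw [hδdef]; linarith
  have hδ1 : δ < 1 := by rw [hδdef]; nlinarith [sq_nonneg ψ₁]
  have hcoef : (1 + δ) * ψ₁ ^ 2 ≤ 1 - δ := by
    have hsplit : 1 - δ = ψ₁ ^ 2 + δ := by rw [hδdef]; ring
    rw [hsplit]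
    nlinarith
  have hvar : 0 ≤ ∫ ω, ε ω ^ 2 ∂μ := integral_nonneg fun ω => sq_nonneg (ε ω)
  refine ⟨δ, hδ, hδ1, δ + ∫ ω, ε ω ^ 2 ∂μ + (1 + δ⁻¹) * (2 * A ^ 2),
    (1 + δ⁻¹) * (2 * ψ₂ ^ 2), by positivity, by positivity, fun y e => ?_⟩
  rw [integral_one_add_add_sq hε1 hε2 hmean]
  have hbounded : (ψ₂ * e + g y e) ^ 2 ≤ 2 * (ψ₂ ^ 2 * e ^ 2 + A ^ 2) := by
    have hg2 : g y e ^ 2 ≤ A ^ 2 := sq_le_sq' (abs_le.mp (hg y e)).1 (abs_le.mp (hg y e)).2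
    linarith [add_sq_le (a := ψ₂ * e) (b := g y e)]
  have hyoung := add_sq_le_one_add_mul_sq_add_one_add_inv_mul_sq
    (a := ψ₁ * y) (b := ψ₂ * e + g y e) hδ
  rw [← add_assoc] at hyoung
  have hinv : 0 ≤ 1 + δ⁻¹ := by positivity
  linarith [mul_le_mul_of_nonneg_left hbounded hinv, mul_le_mul_of_nonneg_right hcoef (sq_nonneg y)]

theorem narfima_drift_condition
    {Ω : Type*} [MeasurableSpace Ω] (μ : Measure Ω) [IsProbabilityMeasure μ]
    (ψ₁ ψ₂ : ℝ) (hψ : |ψ₁| < 1)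
    (g : ℝ → ℝ → ℝ) (A : ℝ) (hA : 0 < A) (hg : ∀ y e : ℝ, |g y e| ≤ A)
    (ε : Ω → ℝ) (s : ℝ)
    (hε1 : Integrable ε μ) (hε2 : Integrable (fun ω => ε ω ^ 2) μ)
    (hmean : ∫ ω, ε ω ∂μ = 0) (hvar : ∫ ω, ε ω ^ 2 ∂μ = s ^ 2) :
    ∃ δ : ℝ, 0 < δ ∧ δ < 1 ∧
      ∃ b₀ b₁ : ℝ, 0 ≤ b₀ ∧ 0 ≤ b₁ ∧
        ∀ y e : ℝ,
          (∫ ω, (1 + (ψ₁ * y + ψ₂ * e + g y e + ε ω) ^ 2) ∂μ)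
            ≤ (1 - δ) * (1 + y ^ 2) + (b₀ + b₁ * e ^ 2) :=
  narfima_drift_condition_general μ ψ₁ ψ₂ hψ g A hg ε hε1 hε2 hmean
end

section
/- Suppose scalars β₀, β₁, …, β_k, μ₁, …, μ_k and nonzero φ₁, …, φ_k satisfy β₀ + Σ_{i=1}^k β_i σ(φ_i x + μ_i) = 0 for all x ∈ ℝ, where σ is the logistic sigmoid and the pairs (φ_i, μ_i) are pairwise distinct with φ_i > 0. Then β₀ = β₁ = ⋯ = β_k = 0. -/
noncomputable def logisticSigmoid (x : ℝ) : ℝ := 1 / (1 + Real.exp (-x))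

/-! The complexified sum `F z = c + ∑ βᵢ σ(φᵢ z + μᵢ)` is holomorphic on the strip
`|Im z| < π / φⱼ`, where `φⱼ` is the largest slope; the strip is connected and contains `ℝ`, so `F`
vanishes on it. The `j`-th term has a pole at `p = (πi - μⱼ) / φⱼ` on the boundary of the strip,
while distinctness of the pairs `(φᵢ, μᵢ)` makes every other term holomorphic at `p`. Multiplying
`F` by `1 + exp (-(φⱼ z + μⱼ))` and letting `z → p` inside the strip gives `βⱼ = 0`. Applying this
to the steepest term with nonzero coefficient shows that all `βᵢ` vanish, and then `β₀ = 0`. -/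

open Complex Set Finset
open scoped Real Topology

theorem one_add_exp_neg_eq_zero_iff (w : ℂ) :
    1 + exp (-w) = 0 ↔ ∃ n : ℤ, w = (2 * n + 1) * π * I := by
  have hfactor : 1 + exp (-w) = exp (-w) * (exp w + 1) := by
    rw [mul_add, ← exp_add, neg_add_cancel, exp_zero, mul_one, add_comm]
  rw [hfactor, mul_eq_zero, or_iff_right (exp_ne_zero _), add_eq_zero_iff_eq_neg,
    ← exp_pi_mul_I, exp_eq_exp_iff_exists_int]
  exact exists_congr fun n => by ring_nf

theorem one_add_exp_neg_ne_zero_of_abs_im_lt {w : ℂ} (hw : |w.im| < π) :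
    1 + exp (-w) ≠ 0 := by
  intro h
  obtain ⟨n, rfl⟩ := (one_add_exp_neg_eq_zero_iff w).1 h
  have hodd : (1 : ℝ) ≤ |2 * (n : ℝ) + 1| := by
    exact_mod_cast Int.one_le_abs (show 2 * n + 1 ≠ 0 by omega)
  have him : ((2 * n + 1) * π * I : ℂ).im = (2 * n + 1) * π := by simp
  rw [him, abs_mul, abs_of_pos Real.pi_pos] at hw
  nlinarith [Real.pi_pos]

theorem one_add_exp_neg_affine_ne_zero {a b r : ℝ} {z : ℂ} (hz : |z.im| < r)
    (har : |a| * r ≤ π) : 1 + exp (-(a * z + b)) ≠ 0 := by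
  apply one_add_exp_neg_ne_zero_of_abs_im_lt
  simp only [add_im, im_ofReal_mul, ofReal_im, add_zero, abs_mul]
  nlinarith [abs_nonneg z.im, abs_nonneg a, Real.pi_pos]

/-- `(πi - b) / a` is a pole of `z ↦ (1 + exp (-(a z + b)))⁻¹`; the poles of the `(a', b')` term are
`((2n+1)πi - b') / a'`, and for `0 < a' ≤ a` only `n = 0` could match. -/
theorem one_add_exp_neg_ne_zero_at_pole {a b a' b' : ℝ} (ha' : 0 < a') (hle : a' ≤ a)
    (hne : (a', b') ≠ (a, b)) : 1 + exp (-(a' * ((π * I - b) / a) + b')) ≠ 0 := by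
  intro h
  obtain ⟨n, hn⟩ := (one_add_exp_neg_eq_zero_iff _).1 h
  have ha : 0 < a := ha'.trans_le hle
  have hn' : (a' * b - a * b' : ℂ) + (a * (2 * n + 1) - a') * π * I = 0 := by
    have : (a : ℂ) ≠ 0 := by exact_mod_cast ha.ne'
    field_simp at hn
    linear_combination -hn
  have hre : a' * b - a * b' = 0 := by simpa using congrArg re hn'
  have him : a * (2 * n + 1) - a' = 0 := by simpa using congrArg im hn'
  have hn0 : n = 0 := by
    have hpos : (0 : ℝ) < 2 * n + 1 := by nlinarith
    have hle1 : (2 * n + 1 : ℝ) ≤ 1 := by nlinarith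
    have hlo : (-1 : ℤ) < n := by exact_mod_cast (by linarith : (-1 : ℝ) < n)
    have hhi : n ≤ 0 := by exact_mod_cast (by linarith : (n : ℝ) ≤ 0)
    omega
  subst hn0
  have haa : a' = a := by push_cast at him; linarith
  subst haa
  exact hne (Prod.ext rfl (by nlinarith))

noncomputable def complexSigmoid (w : ℂ) : ℂ := (1 + exp (-w))⁻¹

theorem complexSigmoid_ofReal (x : ℝ) : complexSigmoid x = logisticSigmoid x := by
  simp [complexSigmoid, logisticSigmoid]

theorem differentiableAt_complexSigmoid {w : ℂ} (hw : 1 + exp (-w) ≠ 0) :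
    DifferentiableAt ℂ complexSigmoid w :=
  (by fun_prop : DifferentiableAt ℂ (fun w => 1 + exp (-w)) w).inv hw

theorem eqOn_zero_of_ofReal_eq_zero {F : ℂ → ℂ} {U : Set ℂ} (hF : DifferentiableOn ℂ F U)
    (hU : IsOpen U) (hUc : IsPreconnected U) (h₀ : (0 : ℂ) ∈ U) (hFR : ∀ x : ℝ, F x = 0) :
    EqOn F 0 U := by
  refine (hF.analyticOnNhd hU).eqOn_zero_of_preconnected_of_frequently_eq_zero hUc h₀ ?_
  have hreal : Filter.Tendsto ofReal (𝓝[≠] 0) (𝓝[≠] 0) :=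
    continuous_ofReal.continuousWithinAt.tendsto_nhdsWithin fun x hx => by simpa using hx
  exact hreal.frequently (Filter.Frequently.of_forall fun x => hFR x)

noncomputable def sigmoidSum {ι : Type*} (S : Finset ι) (c : ℝ) (β φ μ : ι → ℝ) (z : ℂ) : ℂ :=
  c + ∑ i ∈ S, β i * complexSigmoid (φ i * z + μ i)

section sigmoidSum

variable {ι : Type*} (S : Finset ι) (c : ℝ) (β φ μ : ι → ℝ)

theorem sigmoidSum_ofReal (x : ℝ) :
    sigmoidSum S c β φ μ x = ↑(c + ∑ i ∈ S, β i * logisticSigmoid (φ i * x + μ i)) := by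
  simp only [sigmoidSum, ← ofReal_mul, ← ofReal_add, complexSigmoid_ofReal]
  push_cast
  rfl

theorem differentiableAt_sigmoidSum {z : ℂ} (hz : ∀ i ∈ S, 1 + exp (-(φ i * z + μ i)) ≠ 0) :
    DifferentiableAt ℂ (sigmoidSum S c β φ μ) z := by
  refine (DifferentiableAt.fun_sum fun i hi => ?_).const_add _
  have hlin : DifferentiableAt ℂ (fun z : ℂ => (φ i : ℂ) * z + μ i) z := by fun_prop
  exact ((differentiableAt_complexSigmoid (hz i hi)).comp z hlin).const_mul _

theorem sigmoidSum_eqOn_zero_of_forall_real {r : ℝ} (hr : 0 < r) (hφr : ∀ i ∈ S, |φ i| * r ≤ π)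
    (hzero : ∀ x : ℝ, c + ∑ i ∈ S, β i * logisticSigmoid (φ i * x + μ i) = 0) :
    EqOn (sigmoidSum S c β φ μ) 0 (im ⁻¹' Ioo (-r) r) := by
  refine eqOn_zero_of_ofReal_eq_zero (fun z hz => ?_) (isOpen_Ioo.preimage continuous_im)
    ((convex_Ioo _ _).linear_preimage imLm).isPreconnected (by simpa using hr)
    fun x => by rw [sigmoidSum_ofReal, hzero, ofReal_zero]
  exact (differentiableAt_sigmoidSum S c β φ μ fun i hi =>
    one_add_exp_neg_affine_ne_zero (abs_lt.2 hz) (hφr i hi)).differentiableWithinAt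

theorem sigmoidSum_erase_mul_eq_neg [DecidableEq ι] {j : ι} {z : ℂ} (hj : j ∈ S)
    (hz : 1 + exp (-(φ j * z + μ j)) ≠ 0) (hF : sigmoidSum S c β φ μ z = 0) :
    sigmoidSum (S.erase j) c β φ μ z * (1 + exp (-(φ j * z + μ j))) = -β j := by
  rw [sigmoidSum, ← add_sum_erase S _ hj, add_left_comm] at hF
  change β j * (1 + exp (-(φ j * z + μ j)))⁻¹ + sigmoidSum (S.erase j) c β φ μ z = 0 at hF
  rw [eq_neg_add_of_add_eq hF, add_zero, neg_mul, mul_assoc, inv_mul_cancel₀ hz, mul_one]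

end sigmoidSum

theorem sigmoid_coeff_eq_zero_of_max_slope {ι : Type*} (S : Finset ι) (c : ℝ) (β φ μ : ι → ℝ)
    {j : ι} (hφ : ∀ i ∈ S, 0 < φ i) (hj : j ∈ S) (hmax : ∀ i ∈ S, φ i ≤ φ j)
    (hdist : ∀ i ∈ S, (φ i, μ i) = (φ j, μ j) → i = j)
    (hzero : ∀ x : ℝ, c + ∑ i ∈ S, β i * logisticSigmoid (φ i * x + μ i) = 0) :
    β j = 0 := by
  classical
  have hφj := hφ j hj
  set r := π / φ j
  have hr : 0 < r := div_pos Real.pi_pos hφj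
  set U : Set ℂ := im ⁻¹' Ioo (-r) r
  set d : ℂ → ℂ := fun z => 1 + exp (-(φ j * z + μ j))
  set p : ℂ := (π * I - μ j) / φ j
  set g : ℂ → ℂ := fun z => sigmoidSum (S.erase j) c β φ μ z * d z
  have hφr : |φ j| * r = π := by rw [abs_of_pos hφj, mul_div_cancel₀ _ hφj.ne']
  have hFU : EqOn (sigmoidSum S c β φ μ) 0 U := by
    refine sigmoidSum_eqOn_zero_of_forall_real S c β φ μ hr (fun i hi => hφr ▸ ?_) hzero
    rw [abs_of_pos (hφ i hi), abs_of_pos hφj]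
    gcongr
    exact hmax i hi
  have hgU : MapsTo g U {-(β j : ℂ)} := fun z hz =>
    sigmoidSum_erase_mul_eq_neg S c β φ μ hj (one_add_exp_neg_affine_ne_zero (abs_lt.2 hz) hφr.le)
      (hFU hz)
  have hp : p ∈ closure U := by
    have hp_im : p.im = r := by simp [p, r]
    rw [closure_preimage_im, closure_Ioo (neg_lt_self hr).ne, Set.mem_preimage, hp_im]
    exact right_mem_Icc.2 (neg_le_self hr.le)
  have hdp : d p = 0 := by
    have hpole : (φ j : ℂ) * p + μ j = π * I := by
      have : (φ j : ℂ) ≠ 0 := by exact_mod_cast hφj.ne'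
      simp only [p, mul_div_cancel₀ _ this, sub_add_cancel]
    simp only [d, hpole, exp_neg_pi_mul_I, add_neg_cancel]
  have hgp : ContinuousAt g p := by
    refine ((differentiableAt_sigmoidSum _ c β φ μ fun i hi => ?_).continuousAt).mul (by fun_prop)
    obtain ⟨hij, hiS⟩ := mem_erase.1 hi
    exact one_add_exp_neg_ne_zero_at_pole (hφ i hiS) (hmax i hiS) (mt (hdist i hiS) hij)
  have hgp_mem : g p ∈ closure {-(β j : ℂ)} := hgp.continuousWithinAt.mem_closure hp hgU
  simpa [g, hdp, eq_comm] using hgp_mem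

theorem sigmoid_linear_independence
    (k : ℕ) (β₀ : ℝ) (β φ μ : Fin k → ℝ)
    (hφ : ∀ i, 0 < φ i)
    (hdist : ∀ i j : Fin k, (φ i, μ i) = (φ j, μ j) → i = j)
    (hzero : ∀ x : ℝ, β₀ + ∑ i : Fin k, β i * logisticSigmoid (φ i * x + μ i) = 0) :
    β₀ = 0 ∧ ∀ i, β i = 0 := by
  set S := univ.filter fun i => β i ≠ 0
  have hzeroS : ∀ x : ℝ, β₀ + ∑ i ∈ S, β i * logisticSigmoid (φ i * x + μ i) = 0 := fun x => by
    rw [sum_filter_of_ne fun i _ h => left_ne_zero_of_mul h]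
    exact hzero x
  have hβ : ∀ i, β i = 0 := by
    by_contra! ⟨i, hi⟩
    obtain ⟨j, hjS, hjmax⟩ := S.exists_max_image φ ⟨i, by simpa [S] using hi⟩
    exact (mem_filter.1 hjS).2 <| sigmoid_coeff_eq_zero_of_max_slope S β₀ β φ μ
      (fun i _ => hφ i) hjS hjmax (fun i _ h => hdist i j h) hzeroS
  refine ⟨?_, hβ⟩
  simpa [hβ] using hzero 0
end
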